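/- Define C_MN(m, 2) = ∑_{t=0}^{m} binom(m, t) (t/m)^t ((m-t)/m)^{m-t} for a positive integer m (with 0^0 = 1). Then 1 ≤ C_MN(m, 2) ≤ Γ(1/2) · Γ(m+1) / Γ(m + 1/2), and in particular log C_MN(m, 2) ≤ (1/2) log m + c for an absolute constant c. -/
import Mathlib


open Finset
open Real


-- Gamma(n+1/2) = sqrt(pi) * (2n)! / (4^n n!)
lemma gamma_nat_add_half (n : ℕ) :
    Real.Gamma ((n : ℝ) + 1/2) = Real.sqrt π * (2*n).factorial / (4^n * n.factorial) := by
  induction n with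
  | zero => simp; rw [show (2:ℝ)⁻¹ = 1/2 by norm_num, Real.Gamma_one_half_eq]
  | succ n ih =>
    have h0 : ((n:ℝ) + 1/2) ≠ 0 := by positivity
    have : ((n+1 : ℕ) : ℝ) + 1/2 = ((n:ℝ) + 1/2) + 1 := by push_cast; ring
    rw [this, Real.Gamma_add_one h0, ih]
    have h2 : (2*(n+1)) = (2*n+1)+1 := by ring
    rw [h2, Nat.factorial_succ, Nat.factorial_succ, Nat.factorial_succ]
    push_cast
    field_simp
    ring


lemma stirling_tendsto' : Filter.Tendsto (Stirling.stirlingSeq ∘ Nat.succ) Filter.atTop (nhds (Real.sqrt π)) := by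
  have := (Stirling.tendsto_stirlingSeq_sqrt_pi).comp (Filter.tendsto_add_atTop_nat 1)
  exact this.congr (fun n => by simp [Function.comp, Nat.succ_eq_add_one])

lemma stirling_lower {n : ℕ} (hn : 1 ≤ n) : Real.sqrt π ≤ Stirling.stirlingSeq n := by
  obtain ⟨k, rfl⟩ := Nat.exists_eq_add_of_le hn
  have := Stirling.stirlingSeq'_antitone.le_of_tendsto stirling_tendsto' k
  simpa [Nat.succ_eq_add_one, add_comm] using this

lemma stirling_upper {n : ℕ} (hn : 1 ≤ n) : Stirling.stirlingSeq n ≤ Real.exp 1 / Real.sqrt 2 := by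
  obtain ⟨k, rfl⟩ := Nat.exists_eq_add_of_le hn
  have := Stirling.stirlingSeq'_antitone (Nat.zero_le k)
  simp only [Function.comp] at this
  rw [← Stirling.stirlingSeq_one]
  simpa [Nat.succ_eq_add_one, add_comm] using this



lemma stirling_pos {n : ℕ} (hn : 1 ≤ n) : (0:ℝ) < Stirling.stirlingSeq n := by
  obtain ⟨k, rfl⟩ := Nat.exists_eq_add_of_le hn
  have := Stirling.stirlingSeq'_pos k
  simpa [Nat.succ_eq_add_one, add_comm] using this

lemma factorial_eq_stirling {n : ℕ} (hn : 1 ≤ n) :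
    (n.factorial : ℝ) = Stirling.stirlingSeq n * Real.sqrt (2*n) * ((n:ℝ)/Real.exp 1)^n := by
  have h1 : (0:ℝ) < Real.sqrt (2*n) := by
    apply Real.sqrt_pos.2; positivity
  have h2 : (0:ℝ) < ((n:ℝ)/Real.exp 1)^n := by
    have : (0:ℝ) < (n:ℝ) := by exact_mod_cast hn
    positivity
  rw [Stirling.stirlingSeq]
  field_simp

lemma gamma_half_identity {n : ℕ} (hn : 1 ≤ n) :
    Real.Gamma ((n : ℝ) + 1/2) =
      Real.sqrt π * Real.sqrt 2 * (Stirling.stirlingSeq (2*n) / Stirling.stirlingSeq n) *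
        ((n:ℝ)/Real.exp 1)^n := by
  have hn' : (0:ℝ) < n := by exact_mod_cast hn
  have h2n : 1 ≤ 2*n := by omega
  rw [gamma_nat_add_half, factorial_eq_stirling hn, factorial_eq_stirling h2n]
  have hsn := stirling_pos hn
  have key1 : ((2*n : ℕ):ℝ) = 2*(n:ℝ) := by push_cast; ring
  have key2 : (((2*n : ℕ):ℝ)/Real.exp 1)^(2*n) = 4^n * (((n:ℝ)/Real.exp 1)^n)^2 := by
    rw [key1, ← pow_mul, mul_comm 2 n, pow_mul]
    have h : (2*(n:ℝ)/Real.exp 1)^n = 2^n * ((n:ℝ)/Real.exp 1)^n := by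
      rw [← mul_pow]; congr 1; ring
    rw [h, mul_pow, show ((4:ℝ))^n = ((2:ℝ)^n)^2 by rw [← pow_mul, mul_comm n 2, pow_mul]; norm_num,
      pow_mul]
  rw [key2]
  have key3 : Real.sqrt (2*((2*n:ℕ):ℝ)) = Real.sqrt 2 * Real.sqrt (2*(n:ℝ)) := by
    rw [key1, show (2:ℝ)*(2*(n:ℝ)) = 2*(2*(n:ℝ)) from rfl, ← Real.sqrt_mul (by norm_num)]
  rw [key3]
  have hE : (0:ℝ) < ((n:ℝ)/Real.exp 1)^n := by positivity
  have hs2 : (0:ℝ) < Real.sqrt (2*(n:ℝ)) := by positivity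
  field_simp



lemma gamma_half_upper {n : ℕ} (hn : 1 ≤ n) :
    Real.Gamma ((n : ℝ) + 1/2) ≤ Real.sqrt π * Real.sqrt 2 * ((n:ℝ)/Real.exp 1)^n := by
  rw [gamma_half_identity hn]
  have hn' : (0:ℝ) < n := by exact_mod_cast hn
  have hE : (0:ℝ) < ((n:ℝ)/Real.exp 1)^n := by positivity
  have h1 : Stirling.stirlingSeq (2*n) / Stirling.stirlingSeq n ≤ 1 := by
    rw [div_le_one (stirling_pos hn)]
    have := Stirling.stirlingSeq'_antitone (show n - 1 ≤ 2*n - 1 by omega)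
    simp only [Function.comp, Nat.succ_eq_add_one] at this
    rwa [Nat.sub_add_cancel hn, Nat.sub_add_cancel (by omega)] at this
  have h2 : (0:ℝ) < Real.sqrt π * Real.sqrt 2 := by
    have := Real.pi_pos; positivity
  calc Real.sqrt π * Real.sqrt 2 * (Stirling.stirlingSeq (2*n) / Stirling.stirlingSeq n) * ((n:ℝ)/Real.exp 1)^n
      ≤ Real.sqrt π * Real.sqrt 2 * 1 * ((n:ℝ)/Real.exp 1)^n := by
        apply mul_le_mul_of_nonneg_right _ (le_of_lt hE)
        exact mul_le_mul_of_nonneg_left h1 (le_of_lt h2)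
    _ = Real.sqrt π * Real.sqrt 2 * ((n:ℝ)/Real.exp 1)^n := by ring

lemma gamma_half_lower {n : ℕ} (hn : 1 ≤ n) :
    2 * π / Real.exp 1 * ((n:ℝ)/Real.exp 1)^n ≤ Real.Gamma ((n : ℝ) + 1/2) := by
  rw [gamma_half_identity hn]
  have hn' : (0:ℝ) < n := by exact_mod_cast hn
  have hE : (0:ℝ) < ((n:ℝ)/Real.exp 1)^n := by positivity
  have hpi := Real.pi_pos
  have he : (0:ℝ) < Real.exp 1 := Real.exp_pos 1
  have hs2 : (0:ℝ) < Real.sqrt 2 := by positivity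
  have hratio : Real.sqrt π / (Real.exp 1 / Real.sqrt 2) ≤
      Stirling.stirlingSeq (2*n) / Stirling.stirlingSeq n :=
    div_le_div₀ (le_of_lt (stirling_pos (show 1 ≤ 2*n by omega)))
      (stirling_lower (show 1 ≤ 2*n by omega)) (stirling_pos hn) (stirling_upper hn)
  have e1 : Real.sqrt π * Real.sqrt π = π := Real.mul_self_sqrt (le_of_lt hpi)
  have e2 : Real.sqrt 2 * Real.sqrt 2 = 2 := Real.mul_self_sqrt (by norm_num)
  have key : 2 * π / Real.exp 1 = Real.sqrt π * Real.sqrt 2 * (Real.sqrt π / (Real.exp 1 / Real.sqrt 2)) := by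
    field_simp
    nlinarith [e1, e2]
  rw [key]
  apply mul_le_mul_of_nonneg_right _ (le_of_lt hE)
  apply mul_le_mul_of_nonneg_left hratio
  positivity



lemma const_ineq : Real.sqrt 2 * π ≤ (2 * π / Real.exp 1) ^ 2 := by
  have h1 : Real.sqrt 2 ≤ 1.5 := by
    rw [show (1.5:ℝ) = Real.sqrt (1.5^2) by rw [Real.sqrt_sq (by norm_num)]]
    apply Real.sqrt_le_sqrt; norm_num
  have h2 : Real.exp 1 < 2.7182818286 := Real.exp_one_lt_d9
  have h3 : π > 3.141592 := Real.pi_gt_d6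
  have he : (0:ℝ) < Real.exp 1 := Real.exp_pos 1
  have hs : (0:ℝ) ≤ Real.sqrt 2 := Real.sqrt_nonneg 2
  rw [div_pow, le_div_iff₀ (by positivity)]
  have hpi := Real.pi_pos
  have step1 : Real.sqrt 2 * π * Real.exp 1 ^ 2 ≤ 1.5 * π * Real.exp 1 ^ 2 := by
    nlinarith [mul_le_mul_of_nonneg_right h1 (mul_nonneg hpi.le (sq_nonneg (Real.exp 1)))]
  have he2 : Real.exp 1 ^ 2 ≤ 2.7182818286 ^ 2 := by nlinarith
  have step2 : (1.5:ℝ) * π * Real.exp 1 ^ 2 ≤ 1.5 * π * 2.7182818286 ^ 2 := by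
    nlinarith [mul_le_mul_of_nonneg_left he2 (show (0:ℝ) ≤ 1.5 * π by positivity)]
  have step3 : (1.5:ℝ) * π * 2.7182818286 ^ 2 ≤ (2*π)^2 := by nlinarith
  linarith

lemma core_ineq {m t : ℕ} (hm : 1 ≤ m) (ht : t ≤ m) :
    Real.Gamma (1/2) * Real.Gamma ((m:ℝ)+1/2) * (t:ℝ)^t * (((m-t:ℕ)):ℝ)^(m-t) ≤
      Real.Gamma ((t:ℝ)+1/2) * Real.Gamma ((((m-t:ℕ)):ℝ)+1/2) * (m:ℝ)^m := by
  obtain ⟨u, rfl⟩ := Nat.exists_eq_add_of_le ht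
  simp only [Nat.add_sub_cancel_left]
  rcases Nat.eq_zero_or_pos t with rfl | ht1
  · simp only [Nat.cast_zero, pow_zero, zero_add, Nat.cast_zero]
    norm_num
  rcases Nat.eq_zero_or_pos u with rfl | hu1
  · simp only [Nat.cast_zero, pow_zero, add_zero, Nat.cast_zero]
    norm_num
    exact le_of_eq (by ring)
  -- main case: 1 ≤ t, 1 ≤ u
  have hpi := Real.pi_pos
  have he : (0:ℝ) < Real.exp 1 := Real.exp_pos 1
  have htR : (0:ℝ) < t := by exact_mod_cast ht1
  have huR : (0:ℝ) < u := by exact_mod_cast hu1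
  have hmR : (0:ℝ) < ((t+u:ℕ):ℝ) := by positivity
  have hEt : (0:ℝ) < ((t:ℝ)/Real.exp 1)^t := by positivity
  have hEu : (0:ℝ) < ((u:ℝ)/Real.exp 1)^u := by positivity
  have hEm : (0:ℝ) < (((t+u:ℕ):ℝ)/Real.exp 1)^(t+u) := by positivity
  have hGt := gamma_half_lower ht1
  have hGu := gamma_half_lower hu1
  have hGm := gamma_half_upper (show 1 ≤ t + u by omega)
  have hGtpos : (0:ℝ) < Real.Gamma ((t:ℝ)+1/2) :=
    Real.Gamma_pos_of_pos (by positivity)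
  have e1 : Real.sqrt π * Real.sqrt π = π := Real.mul_self_sqrt (le_of_lt hpi)
  have algebra : (((t+u:ℕ):ℝ)/Real.exp 1)^(t+u) * ((t:ℝ)^t * (u:ℝ)^u) =
      ((t:ℝ)/Real.exp 1)^t * ((u:ℝ)/Real.exp 1)^u * ((t+u:ℕ):ℝ)^(t+u) := by
    rw [div_pow, div_pow, div_pow, pow_add (Real.exp 1)]
    field_simp
  rw [Real.Gamma_one_half_eq]
  calc Real.sqrt π * Real.Gamma (((t+u:ℕ):ℝ)+1/2) * (t:ℝ)^t * (u:ℝ)^u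
      ≤ Real.sqrt π * (Real.sqrt π * Real.sqrt 2 * (((t+u:ℕ):ℝ)/Real.exp 1)^(t+u)) * (t:ℝ)^t * (u:ℝ)^u := by
        exact mul_le_mul_of_nonneg_right (mul_le_mul_of_nonneg_right
          (mul_le_mul_of_nonneg_left hGm (Real.sqrt_nonneg π)) (by positivity)) (by positivity)
    _ = Real.sqrt 2 * π * (((t:ℝ)/Real.exp 1)^t * ((u:ℝ)/Real.exp 1)^u * ((t+u:ℕ):ℝ)^(t+u)) := by
        rw [← algebra]
        linear_combination (Real.sqrt 2 * ((((t+u:ℕ)):ℝ)/Real.exp 1)^(t+u) * (t:ℝ)^t * (u:ℝ)^u) * e1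
    _ ≤ (2 * π / Real.exp 1)^2 * (((t:ℝ)/Real.exp 1)^t * ((u:ℝ)/Real.exp 1)^u * ((t+u:ℕ):ℝ)^(t+u)) := by
        apply mul_le_mul_of_nonneg_right const_ineq
        positivity
    _ = (2 * π / Real.exp 1 * ((t:ℝ)/Real.exp 1)^t) * (2 * π / Real.exp 1 * ((u:ℝ)/Real.exp 1)^u) * ((t+u:ℕ):ℝ)^(t+u) := by
        ring
    _ ≤ Real.Gamma ((t:ℝ)+1/2) * Real.Gamma (((u:ℕ):ℝ)+1/2) * ((t+u:ℕ):ℝ)^(t+u) := by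
        apply mul_le_mul_of_nonneg_right _ (by positivity)
        apply mul_le_mul hGt hGu (by positivity) (le_of_lt hGtpos)


noncomputable def aG (j : ℕ) : ℝ := Real.Gamma ((j:ℝ) + 1/2)

lemma aG_succ (j : ℕ) : aG (j+1) = ((j:ℝ)+1/2) * aG j := by
  have h : ((j+1:ℕ):ℝ) + 1/2 = ((j:ℝ)+1/2)+1 := by push_cast; ring
  rw [aG, h, Real.Gamma_add_one (by positivity)]; rfl

lemma aG_zero : aG 0 = Real.sqrt π := by
  rw [aG, show ((0:ℕ):ℝ) + 1/2 = 1/2 by norm_num, Real.Gamma_one_half_eq]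

lemma sum_identity (m : ℕ) :
    ∑ t ∈ Finset.range (m+1), (m.choose t : ℝ) * aG t * aG (m-t) = π * m.factorial := by
  induction m with
  | zero =>
    simp [aG_zero]
    exact Real.mul_self_sqrt Real.pi_pos.le
  | succ m ih =>
    have key : ∀ k ∈ Finset.range (m+1),
        ((m.choose k : ℝ)) * aG (k+1) * aG (m-k) + (m.choose k : ℝ) * aG k * aG (m+1-k)
          = ((m:ℝ)+1) * ((m.choose k : ℝ) * aG k * aG (m-k)) := by
      intro k hk
      have hkm : k ≤ m := by simp at hk; omega
      have h1 : m+1-k = (m-k)+1 := by omega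
      rw [h1, aG_succ, aG_succ]
      have hc : ((m-k:ℕ):ℝ) = (m:ℝ) - k := by
        push_cast [Nat.cast_sub hkm]; ring
      rw [hc]; ring
    -- expand the sum
    rw [Finset.sum_range_succ']
    have hf0 : ((m+1).choose 0 : ℝ) * aG 0 * aG (m+1-0) = aG 0 * aG (m+1) := by
      simp
    rw [hf0]
    have hstep : ∀ k, ((m+1).choose (k+1) : ℝ) * aG (k+1) * aG (m+1-(k+1))
        = (m.choose k : ℝ) * aG (k+1) * aG (m-k) + (m.choose (k+1) : ℝ) * aG (k+1) * aG (m-k) := by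
      intro k
      have : m+1-(k+1) = m-k := by omega
      rw [this, Nat.choose_succ_succ]
      push_cast
      ring
    rw [Finset.sum_congr rfl (fun k _ => hstep k), Finset.sum_add_distrib]
    -- handle the shifted sum : ∑_{k<m+1} C(m,k+1) aG(k+1) aG(m-k) = ∑_{j<m+1} g j - g 0
    have hshift : ∑ k ∈ Finset.range (m+1), (m.choose (k+1) : ℝ) * aG (k+1) * aG (m-k)
        = (∑ j ∈ Finset.range (m+1), (m.choose j : ℝ) * aG j * aG (m+1-j)) - aG 0 * aG (m+1) := by
      have e1 : ∑ j ∈ Finset.range (m+2), (m.choose j : ℝ) * aG j * aG (m+1-j)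
          = ∑ k ∈ Finset.range (m+1), (m.choose (k+1) : ℝ) * aG (k+1) * aG (m+1-(k+1))
            + (m.choose 0 : ℝ) * aG 0 * aG (m+1-0) := Finset.sum_range_succ' _ _
      have e2 : ∑ j ∈ Finset.range (m+2), (m.choose j : ℝ) * aG j * aG (m+1-j)
          = ∑ j ∈ Finset.range (m+1), (m.choose j : ℝ) * aG j * aG (m+1-j)
            + (m.choose (m+1) : ℝ) * aG (m+1) * aG (m+1-(m+1)) := Finset.sum_range_succ _ _
      rw [Nat.choose_succ_self] at e2
      simp only [Nat.cast_zero, zero_mul, add_zero, Nat.choose_zero_right, Nat.cast_one, one_mul,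
        Nat.sub_zero] at e1 e2
      have : ∀ k, m+1-(k+1) = m-k := fun k => by omega
      simp only [this] at e1
      linarith [e1, e2]
    rw [hshift]
    have : (∑ k ∈ Finset.range (m+1), (m.choose k : ℝ) * aG (k+1) * aG (m-k))
        + ((∑ j ∈ Finset.range (m+1), (m.choose j : ℝ) * aG j * aG (m+1-j)) - aG 0 * aG (m+1))
        + aG 0 * aG (m+1)
        = ∑ k ∈ Finset.range (m+1),
            (((m.choose k : ℝ)) * aG (k+1) * aG (m-k) + (m.choose k : ℝ) * aG k * aG (m+1-k)) := by
      rw [Finset.sum_add_distrib]; ring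
    rw [this, Finset.sum_congr rfl key, ← Finset.mul_sum, ih, Nat.factorial_succ]
    push_cast
    ring

/-- The Bernoulli Shtarkov sum `C_MN(m, 2) = ∑_{t=0}^m binom(m,t) (t/m)^t ((m-t)/m)^(m-t)`
(with the convention `0^0 = 1`, automatic for natural-number exponents). -/
noncomputable def CMN2 (m : ℕ) : ℝ :=
  ∑ t ∈ Finset.range (m + 1),
    (m.choose t : ℝ) * ((t : ℝ) / m) ^ t * (((m : ℝ) - t) / m) ^ (m - t)



lemma CMN2_ge_one {m : ℕ} (hm : 1 ≤ m) : 1 ≤ CMN2 m := by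
  have hmR : (0:ℝ) < m := by exact_mod_cast hm
  rw [CMN2]
  have hterm : (m.choose m : ℝ) * ((m : ℝ) / m) ^ m * (((m : ℝ) - m) / m) ^ (m - m) = 1 := by
    rw [Nat.choose_self, Nat.sub_self, div_self (ne_of_gt hmR)]
    norm_num
  calc (1:ℝ) = (m.choose m : ℝ) * ((m : ℝ) / m) ^ m * (((m : ℝ) - m) / m) ^ (m - m) := hterm.symm
    _ ≤ _ := by
      apply Finset.single_le_sum (f := fun t =>
        (m.choose t : ℝ) * ((t : ℝ) / m) ^ t * (((m : ℝ) - t) / m) ^ (m - t))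
      · intro i hi
        have him : i ≤ m := by simp at hi; omega
        have h1 : (0:ℝ) ≤ (i:ℝ)/m := by positivity
        have h2 : (0:ℝ) ≤ ((m:ℝ) - i)/m := by
          apply div_nonneg _ (le_of_lt hmR)
          have : (i:ℝ) ≤ m := by exact_mod_cast him
          linarith
        positivity
      · simp

lemma term_rewrite {m t : ℕ} (hm : 1 ≤ m) (ht : t ≤ m) :
    ((t : ℝ) / m) ^ t * (((m : ℝ) - t) / m) ^ (m - t)
      = (t:ℝ)^t * (((m-t:ℕ)):ℝ)^(m-t) / (m:ℝ)^m := by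
  have hmR : (0:ℝ) < m := by exact_mod_cast hm
  have hc : ((m-t:ℕ):ℝ) = (m:ℝ) - t := by push_cast [Nat.cast_sub ht]; ring
  rw [hc, div_pow, div_pow, div_mul_div_comm, ← pow_add]
  congr 2
  omega

lemma CMN2_le {m : ℕ} (hm : 1 ≤ m) :
    CMN2 m ≤ Real.sqrt π * m.factorial / Real.Gamma ((m:ℝ) + 1/2) := by
  have hmR : (0:ℝ) < m := by exact_mod_cast hm
  have hpi := Real.pi_pos
  have hG : (0:ℝ) < Real.Gamma ((m:ℝ) + 1/2) := Real.Gamma_pos_of_pos (by positivity)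
  have hden : (0:ℝ) < Real.sqrt π * Real.Gamma ((m:ℝ) + 1/2) := by positivity
  have hbound : ∀ t ∈ Finset.range (m+1),
      (m.choose t : ℝ) * ((t : ℝ) / m) ^ t * (((m : ℝ) - t) / m) ^ (m - t)
        ≤ (m.choose t : ℝ) * aG t * aG (m-t) / (Real.sqrt π * Real.Gamma ((m:ℝ) + 1/2)) := by
    intro t htm
    have ht : t ≤ m := by simp at htm; omega
    have hcore := core_ineq hm ht
    rw [Real.Gamma_one_half_eq] at hcore
    have hinner : (t:ℝ)^t * (((m-t:ℕ)):ℝ)^(m-t) / (m:ℝ)^m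
        ≤ aG t * aG (m-t) / (Real.sqrt π * Real.Gamma ((m:ℝ) + 1/2)) := by
      simp only [aG]
      rw [div_le_div_iff₀ (by positivity) hden]
      calc (t:ℝ)^t * (((m-t:ℕ)):ℝ)^(m-t) * (Real.sqrt π * Real.Gamma ((m:ℝ) + 1/2))
          = Real.sqrt π * Real.Gamma ((m:ℝ)+1/2) * (t:ℝ)^t * (((m-t:ℕ)):ℝ)^(m-t) := by ring
        _ ≤ Real.Gamma ((t:ℝ)+1/2) * Real.Gamma ((((m-t:ℕ)):ℝ)+1/2) * (m:ℝ)^m := hcore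
        _ = _ := by ring
    calc (m.choose t : ℝ) * ((t : ℝ) / m) ^ t * (((m : ℝ) - t) / m) ^ (m - t)
        = (m.choose t : ℝ) * ((t:ℝ)^t * (((m-t:ℕ)):ℝ)^(m-t) / (m:ℝ)^m) := by
          rw [mul_assoc, term_rewrite hm ht]
      _ ≤ (m.choose t : ℝ) * (aG t * aG (m-t) / (Real.sqrt π * Real.Gamma ((m:ℝ) + 1/2))) :=
          mul_le_mul_of_nonneg_left hinner (by positivity)
      _ = (m.choose t : ℝ) * aG t * aG (m-t) / (Real.sqrt π * Real.Gamma ((m:ℝ) + 1/2)) := by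
          ring
  calc CMN2 m ≤ ∑ t ∈ Finset.range (m+1),
        (m.choose t : ℝ) * aG t * aG (m-t) / (Real.sqrt π * Real.Gamma ((m:ℝ) + 1/2)) :=
        Finset.sum_le_sum hbound
    _ = (∑ t ∈ Finset.range (m+1), (m.choose t : ℝ) * aG t * aG (m-t))
          / (Real.sqrt π * Real.Gamma ((m:ℝ) + 1/2)) := by rw [Finset.sum_div]
    _ = π * m.factorial / (Real.sqrt π * Real.Gamma ((m:ℝ) + 1/2)) := by rw [sum_identity]
    _ = Real.sqrt π * m.factorial / Real.Gamma ((m:ℝ) + 1/2) := by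
        have e1 : Real.sqrt π * Real.sqrt π = π := Real.mul_self_sqrt hpi.le
        have hsp : (0:ℝ) < Real.sqrt π := Real.sqrt_pos.2 hpi
        rw [div_eq_div_iff (ne_of_gt hden) (ne_of_gt hG)]
        linear_combination (-(m.factorial:ℝ) * Real.Gamma ((m:ℝ)+1/2)) * e1

lemma gamma_form {m : ℕ} :
    Real.Gamma (1/2) * Real.Gamma ((m : ℝ) + 1) / Real.Gamma ((m : ℝ) + 1/2)
      = Real.sqrt π * m.factorial / Real.Gamma ((m:ℝ) + 1/2) := by
  rw [Real.Gamma_one_half_eq, Real.Gamma_nat_eq_factorial]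

lemma ratio_le {m : ℕ} (hm : 1 ≤ m) :
    Real.sqrt π * m.factorial / Real.Gamma ((m:ℝ) + 1/2)
      ≤ Real.exp 1 ^ 2 / (2 * Real.sqrt π) * Real.sqrt m := by
  have hmR : (0:ℝ) < m := by exact_mod_cast hm
  have hpi := Real.pi_pos
  have he : (0:ℝ) < Real.exp 1 := Real.exp_pos 1
  have hE : (0:ℝ) < ((m:ℝ)/Real.exp 1)^m := by positivity
  have hnum : Real.sqrt π * m.factorial
      ≤ Real.sqrt π * Real.exp 1 * Real.sqrt m * ((m:ℝ)/Real.exp 1)^m := by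
    rw [factorial_eq_stirling hm]
    have h1 : Real.sqrt (2*(m:ℝ)) = Real.sqrt 2 * Real.sqrt m := Real.sqrt_mul (by norm_num) _
    have h2 := stirling_upper hm
    have hs2 : (0:ℝ) < Real.sqrt 2 := by positivity
    have hsm : (0:ℝ) < Real.sqrt m := Real.sqrt_pos.2 hmR
    calc Real.sqrt π * (Stirling.stirlingSeq m * Real.sqrt (2*(m:ℕ)) * ((m:ℝ)/Real.exp 1)^m)
        ≤ Real.sqrt π * ((Real.exp 1 / Real.sqrt 2) * Real.sqrt (2*(m:ℕ)) * ((m:ℝ)/Real.exp 1)^m) := by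
          apply mul_le_mul_of_nonneg_left _ (Real.sqrt_nonneg π)
          apply mul_le_mul_of_nonneg_right _ hE.le
          apply mul_le_mul_of_nonneg_right h2 (Real.sqrt_nonneg _)
      _ = Real.sqrt π * Real.exp 1 * Real.sqrt m * ((m:ℝ)/Real.exp 1)^m := by
          push_cast
          rw [h1]
          field_simp
  have hden := gamma_half_lower hm
  have hdenpos : (0:ℝ) < 2 * π / Real.exp 1 * ((m:ℝ)/Real.exp 1)^m := by positivity
  calc Real.sqrt π * m.factorial / Real.Gamma ((m:ℝ) + 1/2)
      ≤ (Real.sqrt π * Real.exp 1 * Real.sqrt m * ((m:ℝ)/Real.exp 1)^m)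
          / (2 * π / Real.exp 1 * ((m:ℝ)/Real.exp 1)^m) := by
        apply div_le_div₀ (by positivity) hnum hdenpos hden
    _ = Real.exp 1 ^ 2 / (2 * Real.sqrt π) * Real.sqrt m := by
        have e1 : Real.sqrt π * Real.sqrt π = π := Real.mul_self_sqrt hpi.le
        have hsp : (0:ℝ) < Real.sqrt π := Real.sqrt_pos.2 hpi
        rw [mul_div_mul_right _ _ (ne_of_gt hE), div_div_eq_mul_div]
        rw [show Real.exp 1 ^ 2 / (2 * Real.sqrt π) * Real.sqrt (m:ℝ)
          = Real.exp 1 ^ 2 * Real.sqrt (m:ℝ) / (2 * Real.sqrt π) by ring]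
        rw [div_eq_div_iff (by positivity) (by positivity)]
        linear_combination (2 * Real.exp 1 ^ 2 * Real.sqrt (m:ℝ)) * e1

/-- `1 ≤ C_MN(m,2) ≤ Γ(1/2) Γ(m+1) / Γ(m+1/2)`, and in particular
`log C_MN(m,2) ≤ (1/2) log m + c` for an absolute constant `c`. -/
theorem CMN2_bounds :
    ∃ c : ℝ, ∀ m : ℕ, 1 ≤ m →
      1 ≤ CMN2 m ∧
      CMN2 m ≤ Real.Gamma (1/2) * Real.Gamma ((m : ℝ) + 1) / Real.Gamma ((m : ℝ) + 1/2) ∧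
      Real.log (CMN2 m) ≤ (1/2) * Real.log m + c := by
  refine ⟨Real.log (Real.exp 1 ^ 2 / (2 * Real.sqrt π)), fun m hm => ?_⟩
  have hmR : (0:ℝ) < m := by exact_mod_cast hm
  have hpi := Real.pi_pos
  have h1 := CMN2_ge_one hm
  have h2 : CMN2 m ≤ Real.Gamma (1/2) * Real.Gamma ((m : ℝ) + 1) / Real.Gamma ((m : ℝ) + 1/2) := by
    rw [gamma_form]; exact CMN2_le hm
  refine ⟨h1, h2, ?_⟩
  have hC : (0:ℝ) < Real.exp 1 ^ 2 / (2 * Real.sqrt π) := by positivity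
  have hsm : (0:ℝ) < Real.sqrt m := Real.sqrt_pos.2 hmR
  have h3 : CMN2 m ≤ Real.exp 1 ^ 2 / (2 * Real.sqrt π) * Real.sqrt m := by
    calc CMN2 m ≤ _ := h2
      _ = Real.sqrt π * m.factorial / Real.Gamma ((m:ℝ) + 1/2) := gamma_form
      _ ≤ _ := ratio_le hm
  have h4 := Real.log_le_log (by linarith : (0:ℝ) < CMN2 m) h3
  calc Real.log (CMN2 m) ≤ Real.log (Real.exp 1 ^ 2 / (2 * Real.sqrt π) * Real.sqrt m) := h4
    _ = Real.log (Real.exp 1 ^ 2 / (2 * Real.sqrt π)) + Real.log (Real.sqrt m) :=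
        Real.log_mul (ne_of_gt hC) (ne_of_gt hsm)
    _ = Real.log (Real.exp 1 ^ 2 / (2 * Real.sqrt π)) + Real.log m / 2 := by
        rw [Real.log_sqrt hmR.le]
    _ = (1/2) * Real.log m + Real.log (Real.exp 1 ^ 2 / (2 * Real.sqrt π)) := by ring
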